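/- arXiv:1207.6778 — 2 statements merged into one kernel-verified Lean document; each statement's English description precedes it below -/
import Mathlib

section
/- Let D, E be two points inside triangle ABC (with all 5 points in general position and A, B, C the convex hull). Then the three beams DE:CB (type 2), D:AB (type 1), and E:AC (type 1), for a suitable labeling of A, B, C such that {D,E,B,C} and the relevant triples are positioned as in a (3,2) layer configuration, cover the entire exterior of triangle ABC. -/
open scoped Classical
noncomputable section

/-- Points in the plane. -/
abbrev Pt := ℝ × ℝ

/-- Signed area determinant of the triple (p, q, r). -/
def det (p q r : Pt) : ℝ := (q.1 - p.1) * (r.2 - p.2) - (q.2 - p.2) * (r.1 - p.1)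

/-- A finite point set is in general position if no three distinct points are collinear. -/
def GenPos (S : Finset Pt) : Prop :=
  ∀ p ∈ S, ∀ q ∈ S, ∀ r ∈ S, p ≠ q → p ≠ r → q ≠ r → ¬ Collinear ℝ ({p, q, r} : Set Pt)

/-- A finite point set is in convex position if no point lies in the
convex hull of the others. -/
def ConvexPos (S : Finset Pt) : Prop :=
  ∀ p ∈ S, p ∉ convexHull ℝ ((S.erase p : Finset Pt) : Set Pt)

/-- The vertices of the convex hull of a finite point set. -/
def hullVerts (S : Finset Pt) : Finset Pt :=
  S.filter (fun p => p ∉ convexHull ℝ ((S.erase p : Finset Pt) : Set Pt))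

/-- `S` is an empty convex pentagon of the point set `P`. -/
def EmptyConvexPentagon (P S : Finset Pt) : Prop :=
  S ⊆ P ∧ S.card = 5 ∧ ConvexPos S ∧
    ∀ p ∈ P, p ∉ S → p ∉ interior (convexHull ℝ (S : Set Pt))

/-- Type-1 beam `a : bc`: the convex cone with apex `a` spanned by the rays from `a`
through `b` and through `c`, minus the triangle `abc`. -/
def beam1 (a b c : Pt) : Set Pt :=
  {x | (∃ s t : ℝ, 0 ≤ s ∧ 0 ≤ t ∧ x = a + s • (b - a) + t • (c - a)) ∧
       x ∉ convexHull ℝ ({a, b, c} : Set Pt)}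

/-- Type-2 beam `pq : rs`: the convex region bounded by the segment `pq`, the ray
from `p` through `s` and the ray from `q` through `r`, minus the quadrilateral `pqrs`. -/
def beam2 (p q r s : Pt) : Set Pt :=
  {x | (∃ y ∈ segment ℝ p q, ∃ u v : ℝ, 0 ≤ u ∧ 0 ≤ v ∧ x = y + u • (s - p) + v • (r - q)) ∧
       x ∉ convexHull ℝ ({p, q, r, s} : Set Pt)}

/-- The O-region of triangle `abc` opposite the vertex `a`: points separated from `a`
by line `bc`, on the same side of line `ac` as `b`, and on the same side of line `ab` as `c`. -/
def ORegionOpp (a b c : Pt) : Set Pt :=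
  {x | det b c x * det b c a < 0 ∧ det a c x * det a c b > 0 ∧ det a b x * det a b c > 0}

/-- The I-region of triangle (or quadrilateral) at vertex `a` relative to the remaining
vertex set `R`: points `x` such that `a` lies strictly inside the convex hull of `{x} ∪ R`. -/
def IRegion (a : Pt) (R : Set Pt) : Set Pt :=
  {x | a ∈ interior (convexHull ℝ (insert x R))}

/-- A convex quadrilateral with vertices `a b c d` in this cyclic order. -/
def CyclicQuad (a b c d : Pt) : Prop :=
  ConvexPos ({a, b, c, d} : Finset Pt) ∧ ({a, b, c, d} : Finset Pt).card = 4 ∧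
    det a c b * det a c d < 0 ∧ det b d a * det b d c < 0

private lemma collinear_of_det_eq_zero {p q r : Pt} (h : det p q r = 0) :
    Collinear ℝ ({p, q, r} : Set Pt) := by
  by_cases hpq : q = p
  · have hs : ({p, q, r} : Set Pt) = {p, r} := by rw [hpq]; ext z; simp [or_comm]
    rw [hs]
    exact collinear_pair ℝ p r
  · rw [collinear_iff_of_mem (Set.mem_insert p {q, r})]
    refine ⟨q - p, ?_⟩
    intro z hz
    have hgoal : ∀ t : ℝ, z.1 = t * (q.1 - p.1) + p.1 → z.2 = t * (q.2 - p.2) + p.2 →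
        ∃ t' : ℝ, z = t' • (q - p) +ᵥ p := by
      intro t h1 h2
      exact ⟨t, Prod.ext (by simpa using h1) (by simpa using h2)⟩
    rcases hz with rfl | rfl | hz
    · exact hgoal 0 (by ring) (by ring)
    · exact hgoal 1 (by ring) (by ring)
    · rw [Set.mem_singleton_iff] at hz
      subst hz
      have hq : q.1 - p.1 ≠ 0 ∨ q.2 - p.2 ≠ 0 := by
        by_contra hc
        push_neg at hc
        exact hpq (Prod.ext (by linarith [hc.1]) (by linarith [hc.2]))
      simp only [det] at h
      rcases hq with hq1 | hq2
      · refine hgoal ((z.1 - p.1)/(q.1 - p.1)) (by field_simp; ring) ?_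
        field_simp
        nlinarith [h]
      · refine hgoal ((z.2 - p.2)/(q.2 - p.2)) ?_ (by field_simp; ring)
        field_simp
        nlinarith [h]

private lemma hull_det_nonneg {P Q R : Pt} {x : Pt}
    (hx : x ∈ convexHull ℝ ({P, Q, R} : Set Pt)) : 0 ≤ det P Q x * det P Q R := by
  have hconv : Convex ℝ {y : Pt | 0 ≤ det P Q y * det P Q R} := by
    intro y hy z hz a b ha hb hab
    simp only [Set.mem_setOf_eq] at *
    have hd : det P Q (a • y + b • z) = a * det P Q y + b * det P Q z := by
      simp only [det, Prod.fst_add, Prod.snd_add, Prod.smul_fst, Prod.smul_snd, smul_eq_mul]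
      linear_combination ((Q.1 - P.1) * P.2 - (Q.2 - P.2) * P.1) * hab
    rw [hd]
    nlinarith [mul_nonneg ha hy, mul_nonneg hb hz]
  have hsub : ({P, Q, R} : Set Pt) ⊆ {y : Pt | 0 ≤ det P Q y * det P Q R} := by
    intro z hz
    simp only [Set.mem_insert_iff, Set.mem_singleton_iff] at hz
    simp only [Set.mem_setOf_eq]
    rcases hz with hz | hz | hz
    · have h0 : det P Q z = 0 := by subst hz; simp only [det]; ring
      simp [h0]
    · have h0 : det P Q z = 0 := by subst hz; simp only [det]; ring
      simp [h0]
    · subst hz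
      nlinarith [sq_nonneg (det P Q z)]
  exact convexHull_min hsub hconv hx

private lemma mem_hull3 {P Q R x : Pt} {wa wb wc : ℝ} (ha : 0 ≤ wa) (hb : 0 ≤ wb)
    (hc : 0 ≤ wc) (hs : wa + wb + wc = 1) (hx : x = wa • P + wb • Q + wc • R) :
    x ∈ convexHull ℝ ({P, Q, R} : Set Pt) := by
  have hP : P ∈ convexHull ℝ ({P, Q, R} : Set Pt) := subset_convexHull ℝ _ (by simp)
  have hQ : Q ∈ convexHull ℝ ({P, Q, R} : Set Pt) := subset_convexHull ℝ _ (by simp)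
  have hR : R ∈ convexHull ℝ ({P, Q, R} : Set Pt) := subset_convexHull ℝ _ (by simp)
  have hconv := convex_convexHull ℝ ({P, Q, R} : Set Pt)
  rcases eq_or_lt_of_le (add_nonneg hb hc) with h0 | hpos
  · have hb0 : wb = 0 := by linarith
    have hc0 : wc = 0 := by linarith
    have ha1 : wa = 1 := by linarith
    rw [hx, hb0, hc0, ha1]
    simpa using hP
  · set s := wb + wc with hs2
    have hz : (wb/s) • Q + (wc/s) • R ∈ convexHull ℝ ({P, Q, R} : Set Pt) :=
      hconv hQ hR (div_nonneg hb hpos.le) (div_nonneg hc hpos.le) (by field_simp; linarith)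
    have hmem := hconv hP hz ha hpos.le (by linarith)
    have heq : x = wa • P + s • ((wb/s) • Q + (wc/s) • R) := by
      rw [hx, smul_add, smul_smul, smul_smul, mul_div_cancel₀ _ hpos.ne',
        mul_div_cancel₀ _ hpos.ne', add_assoc]
    rwa [heq]

private lemma interior_strict {P Q R x : Pt} (hK : det P Q R ≠ 0)
    (hx : x ∈ interior (convexHull ℝ ({P, Q, R} : Set Pt))) :
    0 < det P Q x * det P Q R := by
  have h0 : 0 ≤ det P Q x * det P Q R := hull_det_nonneg (interior_subset hx)
  rcases eq_or_lt_of_le h0 with heq | hlt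
  · exfalso
    have hx0 : det P Q x = 0 := by
      rcases mul_eq_zero.mp heq.symm with h | h
      · exact h
      · exact absurd h hK
    have hPQ : P ≠ Q := by
      intro h
      apply hK
      subst h
      simp only [det]; ring
    obtain ⟨ε, hε, hball⟩ := Metric.isOpen_iff.mp isOpen_interior x hx
    have hm : 0 < (Q.1 - P.1)^2 + (Q.2 - P.2)^2 := by
      rcases (show Q.1 - P.1 ≠ 0 ∨ Q.2 - P.2 ≠ 0 by
        by_contra hc; push_neg at hc
        exact hPQ (Prod.ext (by linarith [hc.1]) (by linarith [hc.2]))) with h | h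
      · nlinarith [sq_nonneg (Q.2 - P.2), pow_pos (abs_pos.mpr h) 2, sq_abs (Q.1 - P.1), sq_abs (Q.2 - P.2)]
      · nlinarith [sq_nonneg (Q.1 - P.1), pow_pos (abs_pos.mpr h) 2, sq_abs (Q.1 - P.1), sq_abs (Q.2 - P.2)]
    set c : ℝ := |P.2 - Q.2| + |Q.1 - P.1| + 1 with hc
    have hcpos : 0 < c := by positivity
    -- choose t with t * det P Q R < 0, |t| = ε / (2 * c)
    have key : ∀ t : ℝ, t * det P Q R < 0 → |t| = ε / (2 * c) → False := by
      intro t ht htabs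
      set y : Pt := (x.1 + t * (P.2 - Q.2), x.2 + t * (Q.1 - P.1)) with hy
      have hdy : det P Q y = t * ((Q.1 - P.1)^2 + (Q.2 - P.2)^2) := by
        simp only [det, hy]
        nlinarith [hx0, (by simp only [det] at hx0; linarith : (Q.1 - P.1) * (x.2 - P.2) - (Q.2 - P.2) * (x.1 - P.1) = 0)]
      have hyball : y ∈ Metric.ball x ε := by
        rw [Metric.mem_ball, Prod.dist_eq]
        have h1 : dist y.1 x.1 = |t| * |P.2 - Q.2| := by
          rw [Real.dist_eq, hy]; simp [abs_mul]
        have h2 : dist y.2 x.2 = |t| * |Q.1 - P.1| := by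
          rw [Real.dist_eq, hy]; simp [abs_mul]
        have hb1 : |t| * |P.2 - Q.2| < ε := by
          rw [htabs]
          calc ε / (2*c) * |P.2 - Q.2| ≤ ε / (2*c) * c := by
                apply mul_le_mul_of_nonneg_left _ (by positivity)
                simp only [hc]
                linarith [abs_nonneg (Q.1 - P.1)]
            _ = ε / 2 := by field_simp
            _ < ε := by linarith
        have hb2 : |t| * |Q.1 - P.1| < ε := by
          rw [htabs]
          calc ε / (2*c) * |Q.1 - P.1| ≤ ε / (2*c) * c := by
                apply mul_le_mul_of_nonneg_left _ (by positivity)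
                simp only [hc]
                linarith [abs_nonneg (P.2 - Q.2)]
            _ = ε / 2 := by field_simp
            _ < ε := by linarith
        rw [max_lt_iff]
        exact ⟨by rw [h1]; exact hb1, by rw [h2]; exact hb2⟩
      have hyh : 0 ≤ det P Q y * det P Q R := hull_det_nonneg (interior_subset (hball hyball))
      rw [hdy] at hyh
      nlinarith [hm, ht]
    rcases lt_or_gt_of_ne hK with hKneg | hKpos
    · exact key (ε / (2*c)) (by nlinarith [div_pos hε (by positivity : (0:ℝ) < 2*c)])
        (abs_of_pos (by positivity))
    · exact key (-(ε / (2*c))) (by nlinarith [div_pos hε (by positivity : (0:ℝ) < 2*c)])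
        (by rw [abs_neg]; exact abs_of_pos (by positivity))
  · exact hlt

private lemma mem_cone {V U W x : Pt} (hK : 0 < det V U W) (h1 : 0 ≤ det V U x)
    (h2 : det V W x ≤ 0) :
    ∃ s t : ℝ, 0 ≤ s ∧ 0 ≤ t ∧ x = V + s • (U - V) + t • (W - V) := by
  refine ⟨-(det V W x)/det V U W, det V U x/det V U W,
    div_nonneg (by linarith) hK.le, div_nonneg h1 hK.le, ?_⟩
  have hK' : det V U W ≠ 0 := hK.ne'
  rw [Prod.ext_iff]
  constructor <;>
  · simp only [det, Prod.fst_add, Prod.snd_add, Prod.smul_fst, Prod.smul_snd,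
      Prod.fst_sub, Prod.snd_sub, smul_eq_mul] at *
    apply mul_left_cancel₀ hK'
    field_simp
    ring

private lemma mem_cone' {V U W x : Pt} (hK : det V U W < 0) (h1 : det V U x ≤ 0)
    (h2 : 0 ≤ det V W x) :
    ∃ s t : ℝ, 0 ≤ s ∧ 0 ≤ t ∧ x = V + s • (U - V) + t • (W - V) := by
  refine ⟨-(det V W x)/det V U W, det V U x/det V U W,
    div_nonneg_iff.mpr (Or.inr ⟨by linarith, hK.le⟩),
    div_nonneg_iff.mpr (Or.inr ⟨h1, hK.le⟩), ?_⟩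
  have hK' : det V U W ≠ 0 := hK.ne
  rw [Prod.ext_iff]
  constructor <;>
  · simp only [det, Prod.fst_add, Prod.snd_add, Prod.smul_fst, Prod.smul_snd,
      Prod.fst_sub, Prod.snd_sub, smul_eq_mul] at *
    apply mul_left_cancel₀ hK'
    field_simp
    ring

private lemma mem_beam2cone {D E B C x : Pt}
    (hfB : det D E B < 0) (hfC : det D E C < 0) (hda : 0 < det D B C)
    (hg0 : det D E x ≤ 0) (hh2 : det D E x ≤ det D B x) (hh4 : det E C x ≤ -det D E x) :
    ∃ y ∈ segment ℝ D E, ∃ u v : ℝ, 0 ≤ u ∧ 0 ≤ v ∧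
      x = y + u • (C - D) + v • (B - E) := by
  have hNneg : det D E C - det D B C < 0 := by linarith
  have hN' : det D E C - det D B C ≠ 0 := hNneg.ne
  have main : ∀ w : ℝ, 0 ≤ w → w ≤ 1 →
      (det D E x - det D B x) - w * det D E B ≤ 0 →
      0 ≤ det D x C - w * det D E C →
      ∃ y ∈ segment ℝ D E, ∃ u v : ℝ, 0 ≤ u ∧ 0 ≤ v ∧
        x = y + u • (C - D) + v • (B - E) := by
    intro w hw0 hw1 hu hv
    refine ⟨(1 - w) • D + w • E, ⟨1 - w, w, by linarith, hw0, by ring, rfl⟩,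
      ((det D E x - det D B x) - w * det D E B) / (det D E C - det D B C),
      (det D x C - w * det D E C) / (-(det D E C - det D B C)),
      div_nonneg_iff.mpr (Or.inr ⟨hu, hNneg.le⟩),
      div_nonneg hv (by linarith), ?_⟩
    have hu1 : ((det D E x - det D B x) - w * det D E B) / (det D E C - det D B C)
        * (det D E C - det D B C) = (det D E x - det D B x) - w * det D E B :=
      div_mul_cancel₀ _ hN'
    have hv1 : (det D x C - w * det D E C) / (-(det D E C - det D B C))
        * (det D E C - det D B C) = -(det D x C - w * det D E C) := by
      rw [div_neg, neg_mul, div_mul_cancel₀ _ hN']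
    rw [Prod.ext_iff]
    constructor
    · apply mul_left_cancel₀ hN'
      rw [show ∀ y u v : Pt, (y + u + v : Pt).1 = y.1 + u.1 + v.1 from fun _ _ _ => rfl]
      simp only [Prod.fst_add, Prod.smul_fst, Prod.fst_sub, smul_eq_mul]
      rw [show (det D E C - det D B C) * (((1-w) * D.1 + w * E.1) +
          ((det D E x - det D B x) - w * det D E B) / (det D E C - det D B C) * (C.1 - D.1) +
          (det D x C - w * det D E C) / (-(det D E C - det D B C)) * (B.1 - E.1))
          = (det D E C - det D B C) * ((1-w) * D.1 + w * E.1)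
            + (((det D E x - det D B x) - w * det D E B) / (det D E C - det D B C)
                * (det D E C - det D B C)) * (C.1 - D.1)
            + ((det D x C - w * det D E C) / (-(det D E C - det D B C))
                * (det D E C - det D B C)) * (B.1 - E.1) from by ring]
      rw [hu1, hv1]
      simp only [det]
      ring
    · apply mul_left_cancel₀ hN'
      simp only [Prod.snd_add, Prod.smul_snd, Prod.snd_sub, smul_eq_mul]
      rw [show (det D E C - det D B C) * (((1-w) * D.2 + w * E.2) +
          ((det D E x - det D B x) - w * det D E B) / (det D E C - det D B C) * (C.2 - D.2) +
          (det D x C - w * det D E C) / (-(det D E C - det D B C)) * (B.2 - E.2))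
          = (det D E C - det D B C) * ((1-w) * D.2 + w * E.2)
            + (((det D E x - det D B x) - w * det D E B) / (det D E C - det D B C)
                * (det D E C - det D B C)) * (C.2 - D.2)
            + ((det D x C - w * det D E C) / (-(det D E C - det D B C))
                * (det D E C - det D B C)) * (B.2 - E.2) from by ring]
      rw [hu1, hv1]
      simp only [det]
      ring
  rcases le_or_gt 0 (det D x C) with hph | hph
  · exact main 0 le_rfl zero_le_one (by linarith) (by simpa using hph)
  · have hfC' : det D E C ≠ 0 := hfC.ne
    have idF : det D x C - det D E C = -(det E C x) - det D E x := by
      simp only [det]; ring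
    have idPL : det D x C * det D E B - (det D E x - det D B x) * det D E C
        = -(det D E x * (det D E C - det D B C)) := by
      simp only [det]; ring
    refine main (det D x C / det D E C) (le_of_lt (div_pos_iff.mpr (Or.inr ⟨hph, hfC⟩)))
      ?_ ?_ ?_
    · rw [div_le_one_iff]
      exact Or.inr (Or.inr ⟨hfC, by linarith⟩)
    · have hnum : (det D E x - det D B x) - (det D x C / det D E C) * det D E B
          = ((det D E x - det D B x) * det D E C - det D x C * det D E B) / det D E C := by
        field_simp
      rw [hnum]
      apply div_nonpos_iff.mpr
      refine Or.inl ⟨?_, hfC.le⟩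
      nlinarith [idPL, mul_nonneg (neg_nonneg.mpr hg0) (neg_nonneg.mpr hNneg.le)]
    · have hnum : det D x C - (det D x C / det D E C) * det D E C = 0 := by
        field_simp; ring
      rw [hnum]

private lemma pos_of_mul_pos' {a b : ℝ} (ha : 0 < a) (h : 0 < a * b) : 0 < b := by
  by_contra hb; push_neg at hb; nlinarith

private lemma neg_of_mul_neg' {a b : ℝ} (ha : 0 < a) (h : a * b < 0) : b < 0 := by
  by_contra hb; push_neg at hb; nlinarith

private lemma nonneg_of_mul_nonneg' {a b : ℝ} (ha : 0 < a) (h : 0 ≤ a * b) : 0 ≤ b := by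
  by_contra hb; push_neg at hb; nlinarith

private lemma nonpos_of_mul_nonpos' {a b : ℝ} (ha : 0 < a) (h : a * b ≤ 0) : b ≤ 0 := by
  by_contra hb; push_neg at hb; nlinarith

private lemma coverArith {dl fa fb fc da db dc ea eb ec t1 t2 t3 g0 h1 h2 h3 h4 : ℝ}
    (hdl : 0 < dl) (hfa : 0 < fa) (hfb : fb < 0) (hfc : fc < 0)
    (hda : 0 < da) (hdb : 0 < db) (hdc : 0 < dc)
    (hea : 0 < ea) (heb : 0 < eb) (hec : 0 < ec)
    (idG0 : dl * g0 = fc*t1 + fa*t2 + fb*t3)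
    (idH1 : dl * h1 = -(db*t1) + dc*t3)
    (idH2 : dl * h2 = da*t1 - dc*t2)
    (idH3 : dl * h3 = -(eb*t1) + ec*t3)
    (idH4 : dl * h4 = eb*t2 - ea*t3)
    (idSum : t1 + t2 + t3 = dl)
    (id1 : da*fa + db*fb + dc*fc = 0)
    (id2 : ea*fa + eb*fb + ec*fc = 0)
    (id3 : ec*db - eb*dc = fa*dl)
    (hx : ¬ (0 ≤ t1 ∧ 0 ≤ t2 ∧ 0 ≤ t3)) :
    (g0 ≤ 0 ∧ g0 ≤ h2 ∧ h4 ≤ -g0) ∨ (0 ≤ h1 ∧ h2 ≤ 0) ∨ (h3 ≤ 0 ∧ 0 ≤ h4) := by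
  have tpos : ∀ b : ℝ, 0 ≤ dl * b → 0 ≤ b := fun b => nonneg_of_mul_nonneg' hdl
  have tneg : ∀ b : ℝ, dl * b ≤ 0 → b ≤ 0 := fun b => nonpos_of_mul_nonpos' hdl
  have tposs : ∀ b : ℝ, 0 < dl * b → 0 < b := fun b => pos_of_mul_pos' hdl
  have tnegs : ∀ b : ℝ, dl * b < 0 → b < 0 := fun b => neg_of_mul_neg' hdl
  rcases lt_or_ge t1 0 with hT1 | hT1
  · by_cases hc2 : dc * t2 < da * t1
    · -- leaf 1b : region 3
      have hT2 : t2 < 0 := neg_of_mul_neg' hdc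
        (by linarith only [hc2, mul_neg_of_pos_of_neg hda hT1])
      have hT3 : 0 < t3 := by linarith
      have e1 : fa*(dc*t2) ≤ fa*(da*t1) := (mul_le_mul_of_nonneg_left hc2.le hfa.le)
      have e2 : 0 < dc*t3 - db*t1 := by
        have := mul_pos hdc hT3
        have := mul_neg_of_pos_of_neg hdb hT1
        linarith
      have e3 : fb*(dc*t3 - db*t1) < 0 := mul_neg_of_neg_of_pos hfb e2
      have e4 : dc*(dl*g0) = fc*(dc*t1) + fa*(dc*t2) + fb*(dc*t3) := by
        linear_combination dc*idG0
      have e5 : (da*fa + db*fb + dc*fc)*t1 = 0 := by rw [id1, zero_mul]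
      have hg0 : dl * g0 < 0 := neg_of_mul_neg' hdc (by linarith only [e1, e3, e4, e5])
      have hh2 : 0 < dl * h2 := by linarith [idH2]
      have hh4 : dl * h4 < 0 := by
        have := mul_neg_of_pos_of_neg heb hT2
        have := mul_pos hea hT3
        linarith [idH4]
      exact Or.inl ⟨tneg _ hg0.le, by linarith [tnegs _ hg0, tposs _ hh2],
        by linarith [tnegs _ hh4, tnegs _ hg0]⟩
    · by_cases hc3 : dc * t3 < db * t1
      · -- leaf 1c : cone at E
        have hT3 : t3 < 0 := neg_of_mul_neg' hdc
          (by linarith only [hc3, mul_neg_of_pos_of_neg hdb hT1])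
        have e4 : db*(dl*h3) = -(eb*(db*t1)) + (ec*db)*t3 := by
          linear_combination db*idH3
        have e5 : (ec*db - eb*dc)*t3 = (fa*dl)*t3 := by rw [id3]
        have e6 : eb*(dc*t3 - db*t1) < 0 := mul_neg_of_pos_of_neg heb (by linarith)
        have e7 : (fa*dl)*t3 < 0 := mul_neg_of_pos_of_neg (mul_pos hfa hdl) hT3
        have hh3' : dl * h3 < 0 := neg_of_mul_neg' hdb (by linarith only [e4, e5, e6, e7])
        have hT2 : 0 < t2 := by linarith
        have hh4 : 0 < dl * h4 := by
          have := mul_pos heb hT2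
          have := mul_neg_of_pos_of_neg hea hT3
          linarith [idH4]
        exact Or.inr (Or.inr ⟨(tnegs _ hh3').le, (tposs _ hh4).le⟩)
      · push_neg at hc2 hc3
        exact Or.inr (Or.inl ⟨tpos _ (by linarith [idH1]), tneg _ (by linarith [idH2])⟩)
  · rcases lt_or_ge t2 0 with hT2 | hT2
    · rcases le_or_gt 0 t3 with hT3 | hT3
      · -- leaf 2a : region 3
        have f1 : fc*t1 ≤ 0 := mul_nonpos_of_nonpos_of_nonneg hfc.le hT1
        have f2 : fa*t2 < 0 := mul_neg_of_pos_of_neg hfa hT2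
        have f3 : fb*t3 ≤ 0 := mul_nonpos_of_nonpos_of_nonneg hfb.le hT3
        have hg0 : dl * g0 < 0 := by linarith [idG0]
        have hh2 : 0 < dl*h2 := by
          have := mul_nonneg hda.le hT1
          have := mul_neg_of_pos_of_neg hdc hT2
          linarith [idH2]
        have hh4 : dl*h4 < 0 := by
          have := mul_neg_of_pos_of_neg heb hT2
          have := mul_nonneg hea.le hT3
          linarith [idH4]
        exact Or.inl ⟨tneg _ hg0.le, by linarith [tnegs _ hg0, tposs _ hh2],
          by linarith [tnegs _ hh4, tnegs _ hg0]⟩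
      · have hT1' : 0 < t1 := by linarith
        by_cases hc : 0 ≤ eb * t2 - ea * t3
        · have hh3 : dl * h3 < 0 := by
            have := mul_nonneg heb.le hT1
            have := mul_neg_of_pos_of_neg hec hT3
            linarith [idH3]
          exact Or.inr (Or.inr ⟨(tnegs _ hh3).le, tpos _ (by linarith [idH4])⟩)
        · push_neg at hc
          have f1 : fa*(eb*t2) < fa*(ea*t3) := by
            apply mul_lt_mul_of_pos_left _ hfa; linarith
          have f2 : (ea*fa + eb*fb + ec*fc)*t3 = 0 := by rw [id2, zero_mul]
          have f3 : 0 < eb*t1 - ec*t3 := by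
            have := mul_pos heb hT1'
            have := mul_neg_of_pos_of_neg hec hT3
            linarith
          have f4 : fc*(eb*t1 - ec*t3) < 0 := mul_neg_of_neg_of_pos hfc f3
          have f5 : eb*(dl*g0) = fc*(eb*t1) + fa*(eb*t2) + fb*(eb*t3) := by
            linear_combination eb*idG0
          have hg0 : dl*g0 < 0 := neg_of_mul_neg' heb (by linarith only [f1, f2, f4, f5])
          have hh2 : 0 < dl*h2 := by
            have := mul_pos hda hT1'
            have := mul_neg_of_pos_of_neg hdc hT2
            linarith [idH2]
          have hh4 : dl*h4 < 0 := by linarith [idH4]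
          exact Or.inl ⟨tneg _ hg0.le, by linarith [tnegs _ hg0, tposs _ hh2],
            by linarith [tnegs _ hh4, tnegs _ hg0]⟩
    · have hT3 : t3 < 0 := by
        rcases not_and_or.mp hx with h | h
        · exact absurd hT1 h
        · rcases not_and_or.mp h with h' | h'
          · exact absurd hT2 h'
          · linarith [lt_of_not_ge h']
      have hh3 : dl * h3 < 0 := by
        have := mul_nonneg heb.le hT1
        have := mul_neg_of_pos_of_neg hec hT3
        linarith [idH3]
      have hh4 : 0 < dl * h4 := by
        have := mul_nonneg heb.le hT2
        have := mul_neg_of_pos_of_neg hea hT3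
        linarith [idH4]
      exact Or.inr (Or.inr ⟨(tnegs _ hh3).le, (tposs _ hh4).le⟩)

private lemma coreCones {A B C D E x : Pt}
    (hΔ : 0 < det A B C)
    (hfA : 0 < det D E A) (hfB : det D E B < 0) (hfC : det D E C < 0)
    (hda : 0 < det D B C) (hdb : 0 < det A D C) (hdc : 0 < det A B D)
    (hea : 0 < det E B C) (heb : 0 < det A E C) (hec : 0 < det A B E)
    (hx : ¬ (0 ≤ det A B x ∧ 0 ≤ det B C x ∧ 0 ≤ det C A x)) :
    (∃ y ∈ segment ℝ D E, ∃ u v : ℝ, 0 ≤ u ∧ 0 ≤ v ∧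
        x = y + u • (C - D) + v • (B - E)) ∨
    (∃ s t : ℝ, 0 ≤ s ∧ 0 ≤ t ∧ x = D + s • (A - D) + t • (B - D)) ∨
    (∃ s t : ℝ, 0 ≤ s ∧ 0 ≤ t ∧ x = E + s • (A - E) + t • (C - E)) := by
  have res := coverArith hΔ hfA hfB hfC hda hdb hdc hea heb hec
    (g0 := det D E x) (h1 := det D A x) (h2 := det D B x) (h3 := det E A x)
    (h4 := det E C x)
    (by simp only [det]; ring) (by simp only [det]; ring) (by simp only [det]; ring)
    (by simp only [det]; ring) (by simp only [det]; ring) (by simp only [det]; ring)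
    (by simp only [det]; ring) (by simp only [det]; ring) (by simp only [det]; ring)
    hx
  rcases res with ⟨k1, k2, k3⟩ | ⟨k1, k2⟩ | ⟨k1, k2⟩
  · exact Or.inl (mem_beam2cone hfB hfC hda k1 k2 k3)
  · refine Or.inr (Or.inl (mem_cone ?_ k1 k2))
    have h : det D A B = det A B D := by simp only [det]; ring
    rw [h]; exact hdc
  · refine Or.inr (Or.inr (mem_cone' ?_ k1 k2))
    have h : det E A C = -det A E C := by simp only [det]; ring
    rw [h]; linarith

private lemma applyCore {A B C D E : Pt}
    (hD : D ∈ interior (convexHull ℝ ({A, B, C} : Set Pt)))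
    (hE : E ∈ interior (convexHull ℝ ({A, B, C} : Set Pt)))
    (hΔ : 0 < det A B C)
    (hfA : 0 < det D E A) (hfB : det D E B < 0) (hfC : det D E C < 0) :
    ∀ x, x ∉ convexHull ℝ ({A, B, C} : Set Pt) →
      x ∈ beam2 D E B C ∪ beam1 D A B ∪ beam1 E A C := by
  have hS1 : ({A, B, C} : Set Pt) = ({B, C, A} : Set Pt) := by ext z; simp; tauto
  have hS2 : ({A, B, C} : Set Pt) = ({C, A, B} : Set Pt) := by ext z; simp; tauto
  have cyc : ∀ p q r : Pt, det p q r = det q r p := by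
    intro p q r; simp only [det]; ring
  have hΔ1 : det B C A ≠ 0 := by rw [← cyc]; exact hΔ.ne'
  have hΔ2 : det C A B ≠ 0 := by rw [cyc]; exact hΔ.ne'
  -- six interior positivity facts
  have hdc : 0 < det A B D := by
    have h := interior_strict hΔ.ne' hD
    exact pos_of_mul_pos' hΔ (by linarith [h, mul_comm (det A B D) (det A B C)])
  have hda : 0 < det D B C := by
    have h := interior_strict hΔ1 (hS1 ▸ hD)
    refine pos_of_mul_pos' hΔ ?_
    rw [show det A B C * det D B C = det B C D * det B C A from by simp only [det]; ring]
    exact h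
  have hdb : 0 < det A D C := by
    have h := interior_strict hΔ2 (hS2 ▸ hD)
    refine pos_of_mul_pos' hΔ ?_
    rw [show det A B C * det A D C = det C A D * det C A B from by simp only [det]; ring]
    exact h
  have hec : 0 < det A B E := by
    have h := interior_strict hΔ.ne' hE
    exact pos_of_mul_pos' hΔ (by linarith [h, mul_comm (det A B E) (det A B C)])
  have hea : 0 < det E B C := by
    have h := interior_strict hΔ1 (hS1 ▸ hE)
    refine pos_of_mul_pos' hΔ ?_
    rw [show det A B C * det E B C = det B C E * det B C A from by simp only [det]; ring]
    exact h
  have heb : 0 < det A E C := by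
    have h := interior_strict hΔ2 (hS2 ▸ hE)
    refine pos_of_mul_pos' hΔ ?_
    rw [show det A B C * det A E C = det C A E * det C A B from by simp only [det]; ring]
    exact h
  -- hull inclusions
  have hDh : D ∈ convexHull ℝ ({A, B, C} : Set Pt) := interior_subset hD
  have hEh : E ∈ convexHull ℝ ({A, B, C} : Set Pt) := interior_subset hE
  have hAh : A ∈ convexHull ℝ ({A, B, C} : Set Pt) := subset_convexHull ℝ _ (by simp)
  have hBh : B ∈ convexHull ℝ ({A, B, C} : Set Pt) := subset_convexHull ℝ _ (by simp)
  have hCh : C ∈ convexHull ℝ ({A, B, C} : Set Pt) := subset_convexHull ℝ _ (by simp)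
  have hsub1 : convexHull ℝ ({D, A, B} : Set Pt) ⊆ convexHull ℝ ({A, B, C} : Set Pt) := by
    apply convexHull_min _ (convex_convexHull ℝ _)
    intro z hz
    rcases hz with rfl | rfl | hz
    · exact hDh
    · exact hAh
    · rw [Set.mem_singleton_iff] at hz; subst hz; exact hBh
  have hsub2 : convexHull ℝ ({E, A, C} : Set Pt) ⊆ convexHull ℝ ({A, B, C} : Set Pt) := by
    apply convexHull_min _ (convex_convexHull ℝ _)
    intro z hz
    rcases hz with rfl | rfl | hz
    · exact hEh
    · exact hAh
    · rw [Set.mem_singleton_iff] at hz; subst hz; exact hCh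
  have hsub3 : convexHull ℝ ({D, E, B, C} : Set Pt) ⊆ convexHull ℝ ({A, B, C} : Set Pt) := by
    apply convexHull_min _ (convex_convexHull ℝ _)
    intro z hz
    rcases hz with rfl | rfl | rfl | hz
    · exact hDh
    · exact hEh
    · exact hBh
    · rw [Set.mem_singleton_iff] at hz; subst hz; exact hCh
  intro x hx
  have hT : ¬ (0 ≤ det A B x ∧ 0 ≤ det B C x ∧ 0 ≤ det C A x) := by
    rintro ⟨t1, t2, t3⟩
    apply hx
    apply mem_hull3 (wa := det B C x / det A B C) (wb := det C A x / det A B C)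
      (wc := det A B x / det A B C)
      (div_nonneg t2 hΔ.le) (div_nonneg t3 hΔ.le) (div_nonneg t1 hΔ.le)
    · rw [show det B C x / det A B C + det C A x / det A B C + det A B x / det A B C
          = (det B C x + det C A x + det A B x) / det A B C from by ring,
        show det B C x + det C A x + det A B x = det A B C from by simp only [det]; ring]
      exact div_self hΔ.ne'
    · rw [Prod.ext_iff]
      constructor
      · apply mul_left_cancel₀ hΔ.ne'
        simp only [Prod.fst_add, Prod.smul_fst, smul_eq_mul]
        rw [show det A B C * (det B C x / det A B C * A.1 + det C A x / det A B C * B.1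
              + det A B x / det A B C * C.1)
            = (det B C x / det A B C * det A B C) * A.1
              + (det C A x / det A B C * det A B C) * B.1
              + (det A B x / det A B C * det A B C) * C.1 from by ring,
          div_mul_cancel₀ _ hΔ.ne', div_mul_cancel₀ _ hΔ.ne', div_mul_cancel₀ _ hΔ.ne']
        simp only [det]; ring
      · apply mul_left_cancel₀ hΔ.ne'
        simp only [Prod.snd_add, Prod.smul_snd, smul_eq_mul]
        rw [show det A B C * (det B C x / det A B C * A.2 + det C A x / det A B C * B.2
              + det A B x / det A B C * C.2)
            = (det B C x / det A B C * det A B C) * A.2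
              + (det C A x / det A B C * det A B C) * B.2
              + (det A B x / det A B C * det A B C) * C.2 from by ring,
          div_mul_cancel₀ _ hΔ.ne', div_mul_cancel₀ _ hΔ.ne', div_mul_cancel₀ _ hΔ.ne']
        simp only [det]; ring
  rcases coreCones hΔ hfA hfB hfC hda hdb hdc hea heb hec hT with h | h | h
  · exact Or.inl (Or.inl ⟨h, fun hmem => hx (hsub3 hmem)⟩)
  · exact Or.inl (Or.inr ⟨h, fun hmem => hx (hsub1 hmem)⟩)
  · exact Or.inr ⟨h, fun hmem => hx (hsub2 hmem)⟩

private lemma beam2_subset_comm {p q r s : Pt} : beam2 p q r s ⊆ beam2 q p s r := by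
  rintro x ⟨⟨y, hy, u, v, hu, hv, hxeq⟩, hhull⟩
  refine ⟨⟨y, by rw [segment_symm]; exact hy, v, u, hv, hu, by rw [hxeq, add_right_comm]⟩, ?_⟩
  have hset : ({q, p, s, r} : Set Pt) = ({p, q, r, s} : Set Pt) := by ext z; simp; tauto
  rw [hset]
  exact hhull

private lemma applyCore2 {A B C D E : Pt}
    (hD : D ∈ interior (convexHull ℝ ({A, B, C} : Set Pt)))
    (hE : E ∈ interior (convexHull ℝ ({A, B, C} : Set Pt)))
    (hor : 0 < det A B C * det D E A)
    (hfB : det D E B * det D E A < 0) (hfC : det D E C * det D E A < 0) :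
    ∀ x, x ∉ convexHull ℝ ({A, B, C} : Set Pt) →
      x ∈ beam2 D E B C ∪ beam1 D A B ∪ beam1 E A C := by
  rcases lt_trichotomy (det D E A) 0 with hu | hu | hu
  · -- swap D and E, B and C
    have hΔ : det A B C < 0 := by
      by_contra h
      push_neg at h
      nlinarith
    have hvB : 0 < det D E B := by
      by_contra h
      push_neg at h
      nlinarith
    have hvC : 0 < det D E C := by
      by_contra h
      push_neg at h
      nlinarith
    have hset : ({A, C, B} : Set Pt) = ({A, B, C} : Set Pt) := by ext z; simp; tauto
    have happ := applyCore (A := A) (B := C) (C := B) (D := E) (E := D)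
      (by rw [hset]; exact hE) (by rw [hset]; exact hD)
      (by rw [show det A C B = -det A B C from by simp only [det]; ring]; linarith)
      (by rw [show det E D A = -det D E A from by simp only [det]; ring]; linarith)
      (by rw [show det E D C = -det D E C from by simp only [det]; ring]; linarith)
      (by rw [show det E D B = -det D E B from by simp only [det]; ring]; linarith)
    intro x hx
    rcases happ x (by rw [hset]; exact hx) with (h | h) | h
    · exact Or.inl (Or.inl (beam2_subset_comm h))
    · exact Or.inr h
    · exact Or.inl (Or.inr h)
  · exfalso
    rw [hu, mul_zero] at hor
    exact lt_irrefl 0 hor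
  · have hΔ : 0 < det A B C := by
      by_contra h
      push_neg at h
      nlinarith
    have hvB : det D E B < 0 := by
      by_contra h
      push_neg at h
      nlinarith
    have hvC : det D E C < 0 := by
      by_contra h
      push_neg at h
      nlinarith
    exact applyCore hD hE hΔ hu hvB hvC

set_option maxHeartbeats 2000000

/-- For a (3,2) layer configuration with outer triangle ABC and inner points D, E,
for a suitable labeling of A, B, C, the beams DE:CB, D:AB and E:AC cover
the exterior of the triangle. -/
theorem stmt8 (A B C D E : Pt)
    (hcard : ({A, B, C, D, E} : Finset Pt).card = 5)
    (hgp : GenPos ({A, B, C, D, E} : Finset Pt))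
    (hD : D ∈ interior (convexHull ℝ ({A, B, C} : Set Pt)))
    (hE : E ∈ interior (convexHull ℝ ({A, B, C} : Set Pt))) :
    ∃ A' B' C' : Pt, ({A', B', C'} : Finset Pt) = ({A, B, C} : Finset Pt) ∧
      ∀ x, x ∉ convexHull ℝ ({A, B, C} : Set Pt) →
        x ∈ beam2 D E B' C' ∪ beam1 D A' B' ∪ beam1 E A' C' := by
  -- distinctness
  have card4 : ∀ a b c d : Pt, ({a, b, c, d} : Finset Pt).card ≤ 4 := by
    intro a b c d
    calc ({a, b, c, d} : Finset Pt).card ≤ ({b, c, d} : Finset Pt).card + 1 :=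
          Finset.card_insert_le _ _
      _ ≤ (({c, d} : Finset Pt).card + 1) + 1 := by
          exact Nat.add_le_add_right (Finset.card_insert_le _ _) 1
      _ ≤ ((({d} : Finset Pt).card + 1) + 1) + 1 := by
          exact Nat.add_le_add_right (Nat.add_le_add_right (Finset.card_insert_le _ _) 1) 1
      _ = 4 := by simp
  have habs : ∀ S : Finset Pt, ({A, B, C, D, E} : Finset Pt) ⊆ S → S.card ≤ 4 → False := by
    intro S hsub hc
    have := Finset.card_le_card hsub
    omega
  have hAB : A ≠ B := by
    intro h
    exact habs {B, C, D, E} (by intro z hz; simp [h] at hz ⊢; tauto) (card4 _ _ _ _)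
  have hAC : A ≠ C := by
    intro h
    exact habs {B, C, D, E} (by intro z hz; simp [h] at hz ⊢; tauto) (card4 _ _ _ _)
  have hBC : B ≠ C := by
    intro h
    exact habs {A, C, D, E} (by intro z hz; simp [h] at hz ⊢; tauto) (card4 _ _ _ _)
  have hDE : D ≠ E := by
    intro h
    exact habs {A, B, C, E} (by intro z hz; simp [h] at hz ⊢; tauto) (card4 _ _ _ _)
  have hDA : D ≠ A := by
    intro h
    exact habs {A, B, C, E} (by intro z hz; simp [h] at hz ⊢; tauto) (card4 _ _ _ _)
  have hDB : D ≠ B := by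
    intro h
    exact habs {A, B, C, E} (by intro z hz; simp [h] at hz ⊢; tauto) (card4 _ _ _ _)
  have hDC : D ≠ C := by
    intro h
    exact habs {A, B, C, E} (by intro z hz; simp [h] at hz ⊢; tauto) (card4 _ _ _ _)
  have hEA : E ≠ A := by
    intro h
    exact habs {A, B, C, D} (by intro z hz; simp [h] at hz ⊢; tauto) (card4 _ _ _ _)
  have hEB : E ≠ B := by
    intro h
    exact habs {A, B, C, D} (by intro z hz; simp [h] at hz ⊢; tauto) (card4 _ _ _ _)
  have hEC : E ≠ C := by
    intro h
    exact habs {A, B, C, D} (by intro z hz; simp [h] at hz ⊢; tauto) (card4 _ _ _ _)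
  -- nonzero determinants
  have hdetne : ∀ p q r : Pt, p ∈ ({A, B, C, D, E} : Finset Pt) →
      q ∈ ({A, B, C, D, E} : Finset Pt) → r ∈ ({A, B, C, D, E} : Finset Pt) →
      p ≠ q → p ≠ r → q ≠ r → det p q r ≠ 0 := by
    intro p q r hp hq hr h1 h2 h3 h0
    exact hgp p hp q hq r hr h1 h2 h3 (collinear_of_det_eq_zero h0)
  have hΔ0 : det A B C ≠ 0 := hdetne A B C (by simp) (by simp) (by simp) hAB hAC hBC
  have hu0 : det D E A ≠ 0 := hdetne D E A (by simp) (by simp) (by simp) hDE hDA hEA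
  have hv0 : det D E B ≠ 0 := hdetne D E B (by simp) (by simp) (by simp) hDE hDB hEB
  have hw0 : det D E C ≠ 0 := hdetne D E C (by simp) (by simp) (by simp) hDE hDC hEC
  -- helper finishing a lone-vertex case
  have FINAL : ∀ P Q R : Pt, ({P, Q, R} : Set Pt) = ({A, B, C} : Set Pt) →
      ({P, Q, R} : Finset Pt) = ({A, B, C} : Finset Pt) →
      det D E Q * det D E P < 0 → det D E R * det D E P < 0 →
      det P Q R ≠ 0 → det D E P ≠ 0 →
      ∃ A' B' C' : Pt, ({A', B', C'} : Finset Pt) = ({A, B, C} : Finset Pt) ∧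
        ∀ x, x ∉ convexHull ℝ ({A, B, C} : Set Pt) →
          x ∈ beam2 D E B' C' ∪ beam1 D A' B' ∪ beam1 E A' C' := by
    intro P Q R hset hfin hQ hR hPQR hDEP
    have hD' : D ∈ interior (convexHull ℝ ({P, Q, R} : Set Pt)) := by rw [hset]; exact hD
    have hE' : E ∈ interior (convexHull ℝ ({P, Q, R} : Set Pt)) := by rw [hset]; exact hE
    rcases lt_or_gt_of_ne (mul_ne_zero hPQR hDEP) with hor | hor
    · -- use (P, R, Q)
      have hset2 : ({P, R, Q} : Set Pt) = ({P, Q, R} : Set Pt) := by ext z; simp; tauto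
      refine ⟨P, R, Q, by rw [← hfin]; ext z; simp; tauto, ?_⟩
      intro x hx
      exact applyCore2 (A := P) (B := R) (C := Q)
        (by rw [hset2]; exact hD') (by rw [hset2]; exact hE')
        (by rw [show det P R Q = -det P Q R from by simp only [det]; ring]; nlinarith)
        hR hQ x (by rw [hset2, hset]; exact hx)
    · refine ⟨P, Q, R, hfin, ?_⟩
      intro x hx
      exact applyCore2 (A := P) (B := Q) (C := R) hD' hE' hor hQ hR x
        (by rw [hset]; exact hx)
  -- lone vertex case analysis
  have huv0 : det D E A * det D E B ≠ 0 := mul_ne_zero hu0 hv0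
  have huw0 : det D E A * det D E C ≠ 0 := mul_ne_zero hu0 hw0
  have key2 : (det D E C * det A B D + det D E A * det B C D + det D E B * det C A D)
      * det A B C = 0 := by
    rw [show det D E C * det A B D + det D E A * det B C D + det D E B * det C A D = 0
      from by simp only [det]; ring, zero_mul]
  have hP1 : 0 < det A B D * det A B C := interior_strict hΔ0 hD
  have hP2 : 0 < det B C D * det A B C := by
    have hS1 : ({A, B, C} : Set Pt) = ({B, C, A} : Set Pt) := by ext z; simp; tauto
    have h := interior_strict (show det B C A ≠ 0 from by
      intro h0; exact hΔ0 (by rw [show det A B C = det B C A from by simp only [det]; ring]; exact h0))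
      (hS1 ▸ hD)
    rw [show det B C D * det A B C = det B C D * det B C A from by simp only [det]; ring]
    exact h
  have hP3 : 0 < det C A D * det A B C := by
    have hS2 : ({A, B, C} : Set Pt) = ({C, A, B} : Set Pt) := by ext z; simp; tauto
    have h := interior_strict (show det C A B ≠ 0 from by
      intro h0; exact hΔ0 (by rw [show det A B C = det C A B from by simp only [det]; ring]; exact h0))
      (hS2 ▸ hD)
    rw [show det C A D * det A B C = det C A D * det C A B from by simp only [det]; ring]
    exact h
  rcases lt_or_gt_of_ne huv0 with huv | huv
  · rcases lt_or_gt_of_ne huw0 with huw | huw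
    · -- lone A
      exact FINAL A B C rfl rfl (by linarith [mul_comm (det D E A) (det D E B)])
        (by linarith [mul_comm (det D E A) (det D E C)]) hΔ0 hu0
    · -- lone B : v has opposite sign to u and w
      have h1 : (det D E A * det D E B) * (det D E A * det D E C) < 0 :=
        mul_neg_of_neg_of_pos huv huw
      have h2 : (det D E A * det D E A) * (det D E B * det D E C) < 0 := by
        rw [show (det D E A * det D E A) * (det D E B * det D E C)
          = (det D E A * det D E B) * (det D E A * det D E C) from by ring]
        exact h1
      have hvw : det D E B * det D E C < 0 :=
        neg_of_mul_neg' (mul_self_pos.mpr hu0) h2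
      exact FINAL B A C (by ext z; simp; tauto) (by ext z; simp; tauto)
        huv (by linarith [mul_comm (det D E B) (det D E C)])
        (hdetne B A C (by simp) (by simp) (by simp) (Ne.symm hAB) hBC hAC) hv0
  · rcases lt_or_gt_of_ne huw0 with huw | huw
    · -- lone C
      have h1 : (det D E A * det D E B) * (det D E A * det D E C) < 0 :=
        mul_neg_of_pos_of_neg huv huw
      have h2 : (det D E A * det D E A) * (det D E B * det D E C) < 0 := by
        rw [show (det D E A * det D E A) * (det D E B * det D E C)
          = (det D E A * det D E B) * (det D E A * det D E C) from by ring]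
        exact h1
      have hvw : det D E B * det D E C < 0 :=
        neg_of_mul_neg' (mul_self_pos.mpr hu0) h2
      exact FINAL C A B (by ext z; simp; tauto) (by ext z; simp; tauto)
        huw (by linarith [mul_comm (det D E B) (det D E C)])
        (hdetne C A B (by simp) (by simp) (by simp) (Ne.symm hAC) (Ne.symm hBC) hAB) hw0
    · -- all same sign : contradiction
      exfalso
      rcases lt_or_gt_of_ne hu0 with hu | hu
      · have hv : det D E B < 0 := by
          by_contra h
          push_neg at h
          exact absurd huv (not_lt.mpr (mul_nonpos_of_nonpos_of_nonneg hu.le h))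
        have hw : det D E C < 0 := by
          by_contra h
          push_neg at h
          exact absurd huw (not_lt.mpr (mul_nonpos_of_nonpos_of_nonneg hu.le h))
        have m1 : 0 < (-det D E A) * (det B C D * det A B C) :=
          mul_pos (neg_pos.mpr hu) hP2
        have m2 : 0 < (-det D E B) * (det C A D * det A B C) :=
          mul_pos (neg_pos.mpr hv) hP3
        have m3 : 0 < (-det D E C) * (det A B D * det A B C) :=
          mul_pos (neg_pos.mpr hw) hP1
        linarith only [key2, m1, m2, m3]
      · have hv : 0 < det D E B := by
          by_contra h
          push_neg at h
          exact absurd huv (not_lt.mpr (mul_nonpos_of_nonneg_of_nonpos hu.le h))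
        have hw : 0 < det D E C := by
          by_contra h
          push_neg at h
          exact absurd huw (not_lt.mpr (mul_nonpos_of_nonneg_of_nonpos hu.le h))
        have m1 : 0 < det D E A * (det B C D * det A B C) := mul_pos hu hP2
        have m2 : 0 < det D E B * (det C A D * det A B C) := mul_pos hv hP3
        have m3 : 0 < det D E C * (det A B D * det A B C) := mul_pos hw hP1
        linarith only [key2, m1, m2, m3]
end
end

section
/- Let ABCD be a convex quadrilateral and E a point in its interior, with all points in general position. Then the four type-1 beams E:AB, E:BC, E:CD, E:DA cover the entire exterior of the quadrilateral ABCD. -/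
open scoped Classical
noncomputable section

section Aux

lemma det_ppr' (p r : Pt) : det p p r = 0 := by simp only [det]; ring
lemma det_pqp' (p q : Pt) : det p q p = 0 := by simp only [det]; ring
lemma det_pqq' (p q : Pt) : det p q q = 0 := by simp only [det]; ring

lemma quad_id' (A B C D : Pt) : det A B C - det A B D + det A C D - det B C D = 0 := by
  simp only [det]; ring

lemma plucker' (E P Q R x : Pt) :
    det E P Q * det E R x + det E Q R * det E P x + det E R P * det E Q x = 0 := by
  simp only [det]; ring

lemma samesign' (p q r s : ℝ) (hid : p - q + r - s = 0) (hpr : 0 < p*r) (hqs : 0 < q*s) :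
    0 < p*q ∧ 0 < p*s ∧ 0 < q*r ∧ 0 < r*s := by
  rcases lt_trichotomy p 0 with h|h|h
  · have hr : r < 0 := by nlinarith
    have hq : q < 0 := by nlinarith
    have hs : s < 0 := by nlinarith
    exact ⟨mul_pos_of_neg_of_neg h hq, mul_pos_of_neg_of_neg h hs,
      mul_pos_of_neg_of_neg hq hr, mul_pos_of_neg_of_neg hr hs⟩
  · exfalso; rw [h, zero_mul] at hpr; exact lt_irrefl 0 hpr
  · have hr : 0 < r := by nlinarith
    have hq : 0 < q := by nlinarith
    have hs : 0 < s := by nlinarith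
    exact ⟨mul_pos h hq, mul_pos h hs, mul_pos hq hr, mul_pos hr hs⟩

lemma sign_transfer' (p s X : ℝ) (h1 : 0 < s * X) (h2 : 0 < p * s) : 0 < p * X := by
  rcases lt_trichotomy s 0 with h|h|h
  · have hp : p < 0 := by nlinarith
    have hX : X < 0 := by nlinarith
    exact mul_pos_of_neg_of_neg hp hX
  · exfalso; rw [h, mul_zero] at h2; exact lt_irrefl 0 h2
  · have hp : 0 < p := by nlinarith
    have hX : 0 < X := by nlinarith
    exact mul_pos hp hX

lemma det_affine' (P Q x y : Pt) (a b : ℝ) (hab : a + b = 1) :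
    det P Q (a • x + b • y) = a * det P Q x + b * det P Q y := by
  have hb : b = 1 - a := by linarith
  subst hb
  simp only [det, Prod.smul_fst, Prod.smul_snd, Prod.fst_add, Prod.snd_add, smul_eq_mul]
  ring

lemma convex_hp' (P Q : Pt) (e : ℝ) : Convex ℝ {x : Pt | 0 ≤ e * det P Q x} := by
  intro x hx y hy a b ha hb hab
  simp only [Set.mem_setOf_eq] at hx hy ⊢
  rw [det_affine' P Q x y a b hab]
  nlinarith [mul_nonneg ha hx, mul_nonneg hb hy]

lemma strict_of_interior' (P Q : Pt) (e : ℝ) (he : e ≠ 0) (hPQ : P ≠ Q) (x : Pt)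
    (hx : x ∈ interior {y : Pt | 0 ≤ e * det P Q y}) : 0 < e * det P Q x := by
  set N : ℝ := (Q.1 - P.1)^2 + (Q.2 - P.2)^2 with hNdef
  have hN : 0 < N := by
    rcases lt_or_eq_of_le (by positivity : (0:ℝ) ≤ N) with h|h
    · exact h
    · exfalso
      apply hPQ
      have h1 : Q.1 - P.1 = 0 := by nlinarith [sq_nonneg (Q.1-P.1), sq_nonneg (Q.2-P.2)]
      have h2 : Q.2 - P.2 = 0 := by nlinarith [sq_nonneg (Q.1-P.1), sq_nonneg (Q.2-P.2)]
      exact Prod.ext (by linarith) (by linarith)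
  by_contra hcon
  push_neg at hcon
  set w : Pt := (-(Q.2 - P.2), Q.1 - P.1) with hwdef
  have hdet : ∀ t : ℝ, det P Q (x + t • w) = det P Q x + t * N := by
    intro t
    simp only [det, hwdef, hNdef, Prod.fst_add, Prod.snd_add, Prod.smul_fst, Prod.smul_snd,
      smul_eq_mul]
    ring
  have hcont : ContinuousAt (fun t : ℝ => x + t • w) 0 := by fun_prop
  have hx0 : (fun t : ℝ => x + t • w) 0 ∈ interior {y : Pt | 0 ≤ e * det P Q y} := by
    simpa using hx
  have hev : ∀ᶠ t in nhds (0:ℝ), x + t • w ∈ interior {y : Pt | 0 ≤ e * det P Q y} :=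
    hcont.eventually_mem (isOpen_interior.mem_nhds hx0)
  rw [Metric.eventually_nhds_iff] at hev
  obtain ⟨δ, hδ, hball⟩ := hev
  rcases he.lt_or_gt with hneg|hpos
  · set t : ℝ := min (δ/2) 1 with htdef
    have ht : 0 < t := by positivity
    have htδ : dist t 0 < δ := by
      rw [Real.dist_eq, sub_zero, abs_of_pos ht]
      have : t ≤ δ/2 := min_le_left _ _
      linarith
    have hm := interior_subset (hball htδ)
    simp only [Set.mem_setOf_eq, hdet t] at hm
    nlinarith [mul_pos ht hN]
  · set t : ℝ := -min (δ/2) 1 with htdef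
    have ht : t < 0 := by
      have h0 : (0:ℝ) < min (δ/2) 1 := by positivity
      rw [htdef]
      exact neg_neg_of_pos h0
    have htδ : dist t 0 < δ := by
      rw [Real.dist_eq, sub_zero, abs_of_neg ht, htdef, neg_neg]
      have : min (δ/2) 1 ≤ δ/2 := min_le_left _ _
      linarith
    have hm := interior_subset (hball htδ)
    simp only [Set.mem_setOf_eq, hdet t] at hm
    nlinarith [mul_neg_of_neg_of_pos ht hN]

lemma cone_mem' (E P Q x : Pt) (p : ℝ) (hD : 0 < p * det E P Q)
    (h1 : p * det E Q x ≤ 0) (h2 : 0 ≤ p * det E P x) :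
    ∃ s t : ℝ, 0 ≤ s ∧ 0 ≤ t ∧ x = E + s • (P - E) + t • (Q - E) := by
  have hp : p ≠ 0 := by rintro rfl; rw [zero_mul] at hD; exact lt_irrefl 0 hD
  have hDne : det E P Q ≠ 0 := by
    intro h; rw [h, mul_zero] at hD; exact lt_irrefl 0 hD
  refine ⟨-det E Q x / det E P Q, det E P x / det E P Q, ?_, ?_, ?_⟩
  · rw [← mul_div_mul_left (-det E Q x) (det E P Q) hp]
    exact div_nonneg (by nlinarith) hD.le
  · rw [← mul_div_mul_left (det E P x) (det E P Q) hp]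
    exact div_nonneg h2 hD.le
  · apply Prod.ext
    · simp only [Prod.fst_add, Prod.smul_fst, smul_eq_mul, Prod.fst_sub]
      field_simp
      simp only [det]; ring
    · simp only [Prod.snd_add, Prod.smul_snd, smul_eq_mul, Prod.snd_sub]
      field_simp
      simp only [det]; ring

lemma mem_beam1' (a b c x : Pt)
    (h1 : ∃ s t : ℝ, 0 ≤ s ∧ 0 ≤ t ∧ x = a + s • (b - a) + t • (c - a))
    (h2 : x ∉ convexHull ℝ ({a, b, c} : Set Pt)) : x ∈ beam1 a b c :=
  ⟨h1, h2⟩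

end Aux

/-- The four type-1 beams from an interior point of a convex quadrilateral
through its sides cover the whole exterior of the quadrilateral. -/
theorem stmt9 (A B C D E : Pt) (hq : CyclicQuad A B C D)
    (hE : E ∈ interior (convexHull ℝ ({A, B, C, D} : Set Pt)))
    (hgp : GenPos ({A, B, C, D, E} : Finset Pt)) :
    ∀ x, x ∉ convexHull ℝ ({A, B, C, D} : Set Pt) →
      x ∈ beam1 E A B ∪ beam1 E B C ∪ beam1 E C D ∪ beam1 E D A := by
  obtain ⟨-, -, h1, h2⟩ := hq
  have e1 : det A C B = -det A B C := by simp only [det]; ring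
  have e2 : det B D A = det A B D := by simp only [det]; ring
  have e3 : det B D C = -det B C D := by simp only [det]; ring
  rw [e1] at h1
  rw [e2, e3] at h2
  have hpr : 0 < det A B C * det A C D := by nlinarith
  have hqs : 0 < det A B D * det B C D := by nlinarith
  obtain ⟨hpq, hps, hqr, hrs⟩ := samesign' _ _ _ _ (quad_id' A B C D) hpr hqs
  have hpne : det A B C ≠ 0 := by
    intro h; rw [h, zero_mul] at hpr; exact lt_irrefl 0 hpr
  have hqne : det A B D ≠ 0 := by
    intro h; rw [h, zero_mul] at hqs; exact lt_irrefl 0 hqs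
  have hrne : det A C D ≠ 0 := by
    intro h; rw [h, mul_zero] at hpr; exact lt_irrefl 0 hpr
  have hsne : det B C D ≠ 0 := by
    intro h; rw [h, mul_zero] at hqs; exact lt_irrefl 0 hqs
  have hABne : A ≠ B := by rintro rfl; exact hpne (det_ppr' _ _)
  have hBCne : B ≠ C := by rintro rfl; exact hsne (det_ppr' _ _)
  have hCDne : C ≠ D := by rintro rfl; exact hrne (det_pqq' _ _)
  have hDAne : D ≠ A := by rintro rfl; exact hqne (det_pqp' _ _)
  -- the quadrilateral lies in the four halfplanes, and E is strictly inside each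
  have hsubAB : convexHull ℝ ({A,B,C,D} : Set Pt) ⊆ {y : Pt | 0 ≤ det A B C * det A B y} := by
    apply convexHull_min _ (convex_hp' A B _)
    rintro y hy
    simp only [Set.mem_insert_iff, Set.mem_singleton_iff] at hy
    rcases hy with rfl|rfl|rfl|rfl <;> simp only [Set.mem_setOf_eq]
    · rw [det_pqp']; simp
    · rw [det_pqq']; simp
    · exact mul_self_nonneg _
    · exact hpq.le
  have hEAB : 0 < det A B C * det A B E :=
    strict_of_interior' A B _ hpne hABne E (interior_mono hsubAB hE)
  have eBCA : det B C A = det A B C := by simp only [det]; ring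
  have hsubBC : convexHull ℝ ({A,B,C,D} : Set Pt) ⊆ {y : Pt | 0 ≤ det B C D * det B C y} := by
    apply convexHull_min _ (convex_hp' B C _)
    rintro y hy
    simp only [Set.mem_insert_iff, Set.mem_singleton_iff] at hy
    rcases hy with rfl|rfl|rfl|rfl <;> simp only [Set.mem_setOf_eq]
    · rw [eBCA]; nlinarith
    · rw [det_pqp']; simp
    · rw [det_pqq']; simp
    · exact mul_self_nonneg _
  have hEBC : 0 < det B C D * det B C E :=
    strict_of_interior' B C _ hsne hBCne E (interior_mono hsubBC hE)
  have eCDA : det C D A = det A C D := by simp only [det]; ring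
  have eCDB : det C D B = det B C D := by simp only [det]; ring
  have hsubCD : convexHull ℝ ({A,B,C,D} : Set Pt) ⊆ {y : Pt | 0 ≤ det A C D * det C D y} := by
    apply convexHull_min _ (convex_hp' C D _)
    rintro y hy
    simp only [Set.mem_insert_iff, Set.mem_singleton_iff] at hy
    rcases hy with rfl|rfl|rfl|rfl <;> simp only [Set.mem_setOf_eq]
    · rw [eCDA]; exact mul_self_nonneg _
    · rw [eCDB]; exact hrs.le
    · rw [det_pqp']; simp
    · rw [det_pqq']; simp
  have hECD : 0 < det A C D * det C D E :=
    strict_of_interior' C D _ hrne hCDne E (interior_mono hsubCD hE)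
  have eDAB : det D A B = det A B D := by simp only [det]; ring
  have eDAC : det D A C = det A C D := by simp only [det]; ring
  have hsubDA : convexHull ℝ ({A,B,C,D} : Set Pt) ⊆ {y : Pt | 0 ≤ det A B D * det D A y} := by
    apply convexHull_min _ (convex_hp' D A _)
    rintro y hy
    simp only [Set.mem_insert_iff, Set.mem_singleton_iff] at hy
    rcases hy with rfl|rfl|rfl|rfl <;> simp only [Set.mem_setOf_eq]
    · rw [det_pqq']; simp
    · rw [eDAB]; exact mul_self_nonneg _
    · rw [eDAC]; exact hqr.le
    · rw [det_pqp']; simp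
  have hEDA : 0 < det A B D * det D A E :=
    strict_of_interior' D A _ hqne hDAne E (interior_mono hsubDA hE)
  -- normalize everything to the sign of det A B C
  have eEAB : det E A B = det A B E := by simp only [det]; ring
  have eEBC : det E B C = det B C E := by simp only [det]; ring
  have eECD : det E C D = det C D E := by simp only [det]; ring
  have eEDA : det E D A = det D A E := by simp only [det]; ring
  have hcAB : 0 < det A B C * det E A B := by rw [eEAB]; exact hEAB
  have hcBC : 0 < det A B C * det E B C := by
    rw [eEBC]; exact sign_transfer' _ _ _ hEBC hps
  have hcCD : 0 < det A B C * det E C D := by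
    rw [eECD]; exact sign_transfer' _ _ _ hECD hpr
  have hcDA : 0 < det A B C * det E D A := by
    rw [eEDA]; exact sign_transfer' _ _ _ hEDA hpq
  have hEhull : E ∈ convexHull ℝ ({A,B,C,D} : Set Pt) := interior_subset hE
  have htri : ∀ P Q : Pt, P ∈ ({A,B,C,D} : Set Pt) → Q ∈ ({A,B,C,D} : Set Pt) →
      convexHull ℝ ({E,P,Q} : Set Pt) ⊆ convexHull ℝ ({A,B,C,D} : Set Pt) := by
    intro P Q hP hQ
    apply convexHull_min _ (convex_convexHull ℝ _)
    rintro y hy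
    simp only [Set.mem_insert_iff, Set.mem_singleton_iff] at hy
    rcases hy with rfl|rfl|rfl
    · exact hEhull
    · exact subset_convexHull ℝ _ hP
    · exact subset_convexHull ℝ _ hQ
  intro x hx
  by_cases hAB : 0 ≤ det A B C * det E A x ∧ det A B C * det E B x ≤ 0
  · exact Or.inl (Or.inl (Or.inl (mem_beam1' _ _ _ _
      (cone_mem' E A B x (det A B C) hcAB hAB.2 hAB.1)
      (fun hc => hx (htri A B (by simp) (by simp) hc)))))
  by_cases hBC : 0 ≤ det A B C * det E B x ∧ det A B C * det E C x ≤ 0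
  · exact Or.inl (Or.inl (Or.inr (mem_beam1' _ _ _ _
      (cone_mem' E B C x (det A B C) hcBC hBC.2 hBC.1)
      (fun hc => hx (htri B C (by simp) (by simp) hc)))))
  by_cases hCD : 0 ≤ det A B C * det E C x ∧ det A B C * det E D x ≤ 0
  · exact Or.inl (Or.inr (mem_beam1' _ _ _ _
      (cone_mem' E C D x (det A B C) hcCD hCD.2 hCD.1)
      (fun hc => hx (htri C D (by simp) (by simp) hc))))
  by_cases hDA : 0 ≤ det A B C * det E D x ∧ det A B C * det E A x ≤ 0
  · exact Or.inr (mem_beam1' _ _ _ _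
      (cone_mem' E D A x (det A B C) hcDA hDA.2 hDA.1)
      (fun hc => hx (htri D A (by simp) (by simp) hc)))
  exfalso
  push_neg at hAB hBC hCD hDA
  have I1 := plucker' E A B C x
  have I2 := plucker' E C D A x
  have hI1 : (det A B C * det E A B) * (det A B C * det E C x)
      + (det A B C * det E B C) * (det A B C * det E A x)
      + (det A B C * det E C A) * (det A B C * det E B x) = 0 := by
    linear_combination (det A B C)^2 * I1
  have hI2 : (det A B C * det E C D) * (det A B C * det E A x)
      + (det A B C * det E D A) * (det A B C * det E C x)
      + (det A B C * det E A C) * (det A B C * det E D x) = 0 := by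
    linear_combination (det A B C)^2 * I2
  have hsw : det E A C = -det E C A := by simp only [det]; ring
  rcases le_or_gt 0 (det A B C * det E A x) with ha|ha
  · have hb := hAB ha
    have hc := hBC hb.le
    have hd := hCD hc.le
    have ha' := hDA hd.le
    have hg : det A B C * det E C A < 0 := by
      by_contra hg
      push_neg at hg
      linarith [hI1, mul_pos hcAB hc, mul_pos hcBC ha', mul_nonneg hg hb.le]
    have hAC : 0 < det A B C * det E A C := by rw [hsw, mul_neg]; linarith
    linarith [hI2, mul_pos hcCD ha', mul_pos hcDA hc, mul_pos hAC hd]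
  · have hd : det A B C * det E D x < 0 := by
      by_contra hh
      push_neg at hh
      have := hDA hh
      linarith
    have hc : det A B C * det E C x < 0 := by
      by_contra hh
      push_neg at hh
      have := hCD hh
      linarith
    have hb : det A B C * det E B x < 0 := by
      by_contra hh
      push_neg at hh
      have := hBC hh
      linarith
    have hg : det A B C * det E C A < 0 := by
      by_contra hg
      push_neg at hg
      linarith [hI1, mul_neg_of_pos_of_neg hcAB hc, mul_neg_of_pos_of_neg hcBC ha,
        mul_nonneg hg (neg_nonneg.mpr hb.le)]
    have hAC : 0 < det A B C * det E A C := by rw [hsw, mul_neg]; linarith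
    linarith [hI2, mul_neg_of_pos_of_neg hcCD ha, mul_neg_of_pos_of_neg hcDA hc,
      mul_neg_of_pos_of_neg hAC hd]
end
end
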